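/- arXiv:1709.06069 — 5 statements merged into one kernel-verified Lean document; each statement's English description precedes it below -/
import Mathlib

section
/- A graph G on n ≥ 2 vertices with no isolated vertex is 2-γtg-critical if and only if G is a complete graph. -/
open scoped Classical

/-- The value of the total domination game on `G` with the set `D` of vertices
already totally dominated; `dTurn = true` means Dominator (minimizer) to move,
`dTurn = false` means Staller (maximizer) to move. Each move must be a vertex
totally dominating at least one vertex not in `D`; the value is the number of
moves played until no legal move remains, under optimal play. -/
noncomputable def tgVal {V : Type*} [Fintype V] (G : SimpleGraph V)
    (dTurn : Bool) (D : Finset V) : ℕ :=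
  if h : (Finset.univ.filter fun v => ∃ u, G.Adj v u ∧ u ∉ D).Nonempty then
    1 + (if dTurn then
          ((Finset.univ.filter fun v => ∃ u, G.Adj v u ∧ u ∉ D).attach).inf'
            (Finset.attach_nonempty_iff.mpr h)
            (fun v => tgVal G false (D ∪ G.neighborFinset v.1))
        else
          ((Finset.univ.filter fun v => ∃ u, G.Adj v u ∧ u ∉ D).attach).sup'
            (Finset.attach_nonempty_iff.mpr h)
            (fun v => tgVal G true (D ∪ G.neighborFinset v.1)))
  else 0
termination_by (Finset.univ \ D).card
decreasing_by
  all_goals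
  · obtain ⟨v, hv⟩ := v
    simp only [Finset.mem_filter, Finset.mem_univ, true_and] at hv
    obtain ⟨u, hadj, hu⟩ := hv
    apply Finset.card_lt_card
    rw [Finset.ssubset_iff_of_subset
      (Finset.sdiff_subset_sdiff (subset_refl _) Finset.subset_union_left)]
    exact ⟨u, by simp [hu], by simp [hadj]⟩

/-- The game total domination number (Dominator starts). -/
noncomputable def gammaTG {V : Type*} [Fintype V] (G : SimpleGraph V) : ℕ :=
  tgVal G true ∅

/-- The Staller-start game total domination number. -/
noncomputable def gammaTG' {V : Type*} [Fintype V] (G : SimpleGraph V) : ℕ :=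
  tgVal G false ∅

/-- The game total domination number of `G|S` (vertices of `S` already totally dominated). -/
noncomputable def gammaTGSub {V : Type*} [Fintype V] (G : SimpleGraph V) (S : Finset V) : ℕ :=
  tgVal G true S

/-- `G` is total domination game critical. -/
def IsTGCritical {V : Type*} [Fintype V] (G : SimpleGraph V) : Prop :=
  ∀ v : V, gammaTGSub G {v} < gammaTG G

/-- `G` is `k`-`γtg`-critical. -/
def IsKTGCritical {V : Type*} [Fintype V] (k : ℕ) (G : SimpleGraph V) : Prop :=
  gammaTG G = k ∧ IsTGCritical G

private lemma legal_nonempty {V : Type*} [Fintype V] (G : SimpleGraph V)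
    (hiso : ∀ v : V, ∃ u, G.Adj v u) (D : Finset V) (hD : D ≠ Finset.univ) :
    (Finset.univ.filter fun v => ∃ u, G.Adj v u ∧ u ∉ D).Nonempty := by
  obtain ⟨u, hu⟩ : ∃ u, u ∉ D := by
    by_contra h'
    push_neg at h'
    exact hD (Finset.eq_univ_iff_forall.mpr h')
  obtain ⟨z, hz⟩ := hiso u
  exact ⟨z, by
    simp only [Finset.mem_filter, Finset.mem_univ, true_and]
    exact ⟨u, hz.symm, hu⟩⟩

private lemma tgVal_zero_iff {V : Type*} [Fintype V] (G : SimpleGraph V)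
    (hiso : ∀ v : V, ∃ u, G.Adj v u) (b : Bool) (D : Finset V) :
    tgVal G b D = 0 ↔ D = Finset.univ := by
  constructor
  · intro h'
    rw [tgVal] at h'
    split_ifs at h' with h hb
    · omega
    · omega
    · by_contra hD
      exact h (legal_nonempty G hiso D hD)
  · intro hD
    rw [tgVal, dif_neg]
    intro h
    obtain ⟨v, hv⟩ := h
    simp only [Finset.mem_filter, Finset.mem_univ, true_and] at hv
    obtain ⟨u, _, hu⟩ := hv
    simp [hD] at hu

theorem stmt0 {V : Type*} [Fintype V] (G : SimpleGraph V) (n : ℕ)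
    (hn : Fintype.card V = n) (h2 : 2 ≤ n)
    (hiso : ∀ v : V, ∃ u, G.Adj v u) :
    IsKTGCritical 2 G ↔ G = ⊤ := by
  have hV : 1 < Fintype.card V := by omega
  have : Nontrivial V := Fintype.one_lt_card_iff_nontrivial.mp hV
  constructor
  · rintro ⟨hval, hcrit⟩
    ext a b
    simp only [SimpleGraph.top_adj]
    refine ⟨G.ne_of_adj, fun hab => ?_⟩
    have h1 : gammaTGSub G {a} < 2 := hval ▸ hcrit a
    unfold gammaTGSub at h1
    rw [tgVal] at h1
    have hne : (Finset.univ.filter fun v => ∃ u, G.Adj v u ∧ u ∉ ({a} : Finset V)).Nonempty := by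
      refine legal_nonempty G hiso _ fun h => ?_
      obtain ⟨u, hu⟩ := Fintype.exists_ne_of_one_lt_card hV a
      have : u ∈ ({a} : Finset V) := h ▸ Finset.mem_univ u
      simp [hu] at this
    rw [dif_pos hne, if_pos rfl] at h1
    obtain ⟨w, hw, hweq⟩ := Finset.exists_mem_eq_inf'
      (Finset.attach_nonempty_iff.mpr hne)
      (fun v => tgVal G false ({a} ∪ G.neighborFinset v.1))
    rw [hweq] at h1
    have h0 : tgVal G false ({a} ∪ G.neighborFinset w.1) = 0 := by omega
    rw [tgVal_zero_iff G hiso] at h0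
    have hwa : w.1 = a := by
      have hm : w.1 ∈ ({a} : Finset V) ∪ G.neighborFinset w.1 := by
        rw [h0]; exact Finset.mem_univ _
      rcases Finset.mem_union.mp hm with h | h
      · simpa using h
      · simp at h
    have hb : b ∈ ({a} : Finset V) ∪ G.neighborFinset w.1 := by
      rw [h0]; exact Finset.mem_univ b
    rw [Finset.mem_union, hwa] at hb
    rcases hb with h | h
    · simp at h; exact absurd h.symm hab
    · exact (SimpleGraph.mem_neighborFinset G a b).mp h
  · intro hG
    subst hG
    letI : DecidableRel (⊤ : SimpleGraph V).Adj :=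
      fun a b => Classical.propDecidable ((⊤ : SimpleGraph V).Adj a b)
    have hiso' : ∀ v : V, ∃ u, (⊤ : SimpleGraph V).Adj v u := by
      intro v
      obtain ⟨u, hu⟩ := Fintype.exists_ne_of_one_lt_card hV v
      exact ⟨u, by simp [Ne.symm hu]⟩
    have hkey : ∀ v w : V, w ≠ v →
        tgVal (⊤ : SimpleGraph V) true
          ((⊤ : SimpleGraph V).neighborFinset v ∪ (⊤ : SimpleGraph V).neighborFinset w) = 0 := by
      intro v w hwv
      rw [tgVal_zero_iff _ hiso']
      apply Finset.eq_univ_iff_forall.mpr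
      intro x
      rw [Finset.mem_union]
      by_cases hx : x = v
      · right
        simp only [SimpleGraph.mem_neighborFinset, SimpleGraph.top_adj]
        rw [hx]
        exact hwv
      · left
        simp only [SimpleGraph.mem_neighborFinset, SimpleGraph.top_adj]
        exact fun h => hx h.symm
    have hstaller : ∀ v : V,
        tgVal (⊤ : SimpleGraph V) false (∅ ∪ (⊤ : SimpleGraph V).neighborFinset v) = 1 := by
      intro v
      rw [Finset.empty_union, tgVal]
      have hD : (⊤ : SimpleGraph V).neighborFinset v ≠ Finset.univ := by
        intro h
        have hvm : v ∈ (⊤ : SimpleGraph V).neighborFinset v := h ▸ Finset.mem_univ v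
        simp at hvm
      have hne := legal_nonempty _ hiso' _ hD
      rw [dif_pos hne, if_neg (by simp)]
      show (1 : ℕ) + _ = 1 + 0
      congr 1
      refine Nat.le_zero.mp (Finset.sup'_le _ _ ?_)
      rintro ⟨w, hwmem⟩ -
      simp only [Finset.mem_filter, Finset.mem_univ, true_and,
        SimpleGraph.mem_neighborFinset, SimpleGraph.top_adj] at hwmem
      obtain ⟨u, hwu, hu⟩ := hwmem
      rw [not_ne_iff] at hu
      subst hu
      exact Nat.le_zero.mpr (hkey v w hwu)
    have hgamma : gammaTG (⊤ : SimpleGraph V) = 2 := by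
      unfold gammaTG
      rw [tgVal]
      have hD : (∅ : Finset V) ≠ Finset.univ := by
        intro h
        obtain ⟨x⟩ := (inferInstance : Nonempty V)
        have hx : x ∈ (∅ : Finset V) := h ▸ Finset.mem_univ x
        simp at hx
      have hne := legal_nonempty _ hiso' _ hD
      rw [dif_pos hne, if_pos rfl]
      show (1 : ℕ) + _ = 1 + 1
      congr 1
      apply le_antisymm
      · obtain ⟨w, hwmem⟩ := hne
        exact (Finset.inf'_le _ (Finset.mem_attach _ ⟨w, hwmem⟩)).trans
          (le_of_eq (hstaller w))
      · exact Finset.le_inf' _ _ fun w _ => le_of_eq (hstaller w.1).symm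
    refine ⟨hgamma, fun x => ?_⟩
    rw [hgamma]
    unfold gammaTGSub
    rw [tgVal]
    have hD : ({x} : Finset V) ≠ Finset.univ := by
      intro h
      obtain ⟨u, hu⟩ := Fintype.exists_ne_of_one_lt_card hV x
      have hm : u ∈ ({x} : Finset V) := h ▸ Finset.mem_univ u
      simp [hu] at hm
    have hne := legal_nonempty _ hiso' _ hD
    rw [dif_pos hne, if_pos rfl]
    have hx : x ∈ Finset.univ.filter fun v => ∃ u, (⊤ : SimpleGraph V).Adj v u ∧
        u ∉ ({x} : Finset V) := by
      simp only [Finset.mem_filter, Finset.mem_univ, true_and]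
      obtain ⟨u, hu⟩ := Fintype.exists_ne_of_one_lt_card hV x
      exact ⟨u, by simp [Ne.symm hu], by simp [hu]⟩
    have h0 : tgVal (⊤ : SimpleGraph V) false ({x} ∪ (⊤ : SimpleGraph V).neighborFinset x) = 0 := by
      rw [tgVal_zero_iff _ hiso']
      apply Finset.eq_univ_iff_forall.mpr
      intro u
      rw [Finset.mem_union]
      by_cases hu : u = x
      · left; simp [hu]
      · right; simp [SimpleGraph.mem_neighborFinset, Ne.symm hu]
    refine lt_of_le_of_lt (Nat.add_le_add_left
      ((Finset.inf'_le _ (Finset.mem_attach _ ⟨x, hx⟩)).trans (le_of_eq h0)) 1) one_lt_two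
end

section
/- If u and v are open twins in a graph G (i.e., N(u) = N(v)), then γtg(G) = γtg(G|u) = γtg(G|v). -/
open scoped Classical

/-!
Declaring a twin `u` of an undominated vertex `v` dominated changes nothing: every vertex that
totally dominates `u` also totally dominates `v`, so the legal moves are the same, and after any
move `w` either `u` is dominated anyway (when `w` dominates `v`) or `v` is still undominated and
the same argument applies to the rest of the game.
-/

open Finset

theorem Finset.inf'_attach {α β : Type*} [SemilatticeInf β] (s : Finset α) (h : s.Nonempty)
    (f : α → β) :
    s.attach.inf' (attach_nonempty_iff.mpr h) (fun x => f x.1) = s.inf' h f :=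
  (inf'_map f (by simpa)).symm.trans (inf'_congr _ attach_map_val fun _ _ => rfl)

theorem Finset.sup'_attach {α β : Type*} [SemilatticeSup β] (s : Finset α) (h : s.Nonempty)
    (f : α → β) :
    s.attach.sup' (attach_nonempty_iff.mpr h) (fun x => f x.1) = s.sup' h f :=
  (sup'_map f (by simpa)).symm.trans (sup'_congr _ attach_map_val fun _ _ => rfl)

theorem SimpleGraph.adj_iff_adj_of_neighborSet_eq {V : Type*} (G : SimpleGraph V) {u v : V}
    (htwin : G.neighborSet u = G.neighborSet v) (w : V) : G.Adj w u ↔ G.Adj w v := by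
  rw [G.adj_comm, G.adj_comm w, ← G.mem_neighborSet, htwin, G.mem_neighborSet]

section TotalDominationGame

variable {V : Type*} [Fintype V] (G : SimpleGraph V)

noncomputable def tgMoves (D : Finset V) : Finset V :=
  univ.filter fun w => ∃ x, G.Adj w x ∧ x ∉ D

theorem tgVal_eq (t : Bool) (D : Finset V) :
    tgVal G t D =
      if h : (tgMoves G D).Nonempty then
        1 + (if t then (tgMoves G D).inf' h fun w => tgVal G false (D ∪ G.neighborFinset w)
             else (tgMoves G D).sup' h fun w => tgVal G true (D ∪ G.neighborFinset w))
      else 0 := by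
  rw [tgVal, tgMoves]
  split_ifs
  · exact congrArg (1 + ·) (inf'_attach _ _ fun w => tgVal G false (D ∪ G.neighborFinset w))
  · exact congrArg (1 + ·) (sup'_attach _ _ fun w => tgVal G true (D ∪ G.neighborFinset w))
  · rfl

variable {G}

theorem card_compl_union_neighborFinset_lt {D : Finset V} {w : V} (hw : w ∈ tgMoves G D) :
    (univ \ (D ∪ G.neighborFinset w)).card < (univ \ D).card := by
  obtain ⟨x, hadj, hx⟩ := (mem_filter.mp hw).2
  exact card_lt_card ((ssubset_iff_of_subset (sdiff_subset_sdiff subset_rfl subset_union_left)).mpr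
    ⟨x, by simp [hx], by simp [hadj]⟩)

theorem tgVal_congr {t : Bool} {D D' : Finset V} (hmoves : tgMoves G D = tgMoves G D')
    (hnext : ∀ w ∈ tgMoves G D, ∀ t',
      tgVal G t' (D ∪ G.neighborFinset w) = tgVal G t' (D' ∪ G.neighborFinset w)) :
    tgVal G t D = tgVal G t D' := by
  rw [tgVal_eq, tgVal_eq]
  by_cases hne : (tgMoves G D).Nonempty
  · have hne' : (tgMoves G D').Nonempty := hmoves ▸ hne
    rw [dif_pos hne, dif_pos hne']
    cases t
    · exact congrArg (1 + ·) (sup'_congr hne hmoves fun w hw => hnext w hw true)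
    · exact congrArg (1 + ·) (inf'_congr hne hmoves fun w hw => hnext w hw false)
  · rw [dif_neg hne, dif_neg (hmoves ▸ hne)]

theorem tgMoves_insert_of_neighborSet_eq {u v : V} (huv : u ≠ v)
    (htwin : G.neighborSet u = G.neighborSet v) {D : Finset V} (hv : v ∉ D) :
    tgMoves G (insert u D) = tgMoves G D := by
  ext w
  simp only [tgMoves, mem_filter, mem_univ, true_and, mem_insert]
  constructor
  · rintro ⟨x, hadj, hx⟩
    exact ⟨x, hadj, fun h => hx (Or.inr h)⟩
  · rintro ⟨x, hadj, hx⟩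
    by_cases hxu : x = u
    · subst hxu
      exact ⟨v, (G.adj_iff_adj_of_neighborSet_eq htwin w).mp hadj, by rintro (h | h) <;> tauto⟩
    · exact ⟨x, hadj, by tauto⟩

theorem tgVal_insert_of_neighborSet_eq {u v : V} (huv : u ≠ v)
    (htwin : G.neighborSet u = G.neighborSet v) (t : Bool) (D : Finset V) (hv : v ∉ D) :
    tgVal G t (insert u D) = tgVal G t D := by
  refine tgVal_congr (tgMoves_insert_of_neighborSet_eq huv htwin hv) fun w hw t' => ?_
  rw [insert_union]
  by_cases hvw : G.Adj w v
  · have huw : G.Adj w u := (G.adj_iff_adj_of_neighborSet_eq htwin w).mpr hvw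
    rw [insert_eq_of_mem (mem_union_right _ (G.mem_neighborFinset w u |>.mpr huw))]
  · exact tgVal_insert_of_neighborSet_eq huv htwin t' _ (by simp [hv, hvw])
termination_by (univ \ D).card
decreasing_by
  exact card_compl_union_neighborFinset_lt ((tgMoves_insert_of_neighborSet_eq huv htwin hv) ▸ hw)

end TotalDominationGame

theorem stmt8 {V : Type*} [Fintype V] (G : SimpleGraph V) (u v : V) (huv : u ≠ v)
    (htwin : G.neighborSet u = G.neighborSet v) :
    gammaTG G = gammaTGSub G {u} ∧ gammaTGSub G {u} = gammaTGSub G {v} := by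
  have hu : gammaTGSub G {u} = gammaTG G :=
    tgVal_insert_of_neighborSet_eq huv htwin true ∅ (notMem_empty v)
  have hv : gammaTGSub G {v} = gammaTG G :=
    tgVal_insert_of_neighborSet_eq huv.symm htwin.symm true ∅ (notMem_empty u)
  exact ⟨hu.symm, hu.trans hv.symm⟩
end

section
/- Every γtg-critical graph is open twin-free; i.e., no two distinct vertices of a γtg-critical graph have equal open neighborhoods. -/
open scoped Classical

private lemma sup'_attach_congr {α : Type*} {s t : Finset α} (hst : s = t)
    (hs : s.attach.Nonempty) (ht : t.attach.Nonempty) (f g : α → ℕ)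
    (hfg : ∀ x ∈ t, f x = g x) :
    s.attach.sup' hs (fun x => f x.1) = t.attach.sup' ht (fun x => g x.1) := by
  subst hst
  exact Finset.sup'_congr hs rfl (fun x _ => hfg x.1 x.2)

private lemma inf'_attach_congr {α : Type*} {s t : Finset α} (hst : s = t)
    (hs : s.attach.Nonempty) (ht : t.attach.Nonempty) (f g : α → ℕ)
    (hfg : ∀ x ∈ t, f x = g x) :
    s.attach.inf' hs (fun x => f x.1) = t.attach.inf' ht (fun x => g x.1) := by
  subst hst
  exact Finset.inf'_congr hs rfl (fun x _ => hfg x.1 x.2)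

private lemma tg_insert_twin {V : Type*} [Fintype V] (G : SimpleGraph V) {u v : V}
    (huv : u ≠ v) (h : G.neighborFinset u = G.neighborFinset v)
    (b : Bool) (D : Finset V) (hvD : v ∉ D) :
    tgVal G b (insert u D) = tgVal G b D := by
  have hset : (Finset.univ.filter fun w => ∃ x, G.Adj w x ∧ x ∉ insert u D)
      = (Finset.univ.filter fun w => ∃ x, G.Adj w x ∧ x ∉ D) := by
    ext w
    simp only [Finset.mem_filter, Finset.mem_univ, true_and, Finset.mem_insert]
    constructor
    · rintro ⟨x, hx, hx2⟩
      exact ⟨x, hx, fun hxD => hx2 (Or.inr hxD)⟩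
    · rintro ⟨x, hx, hx2⟩
      by_cases hxu : x = u
      · have hwNu : w ∈ G.neighborFinset u := by
          rw [SimpleGraph.mem_neighborFinset]; exact (hxu ▸ hx).symm
        have hwNv : w ∈ G.neighborFinset v := h ▸ hwNu
        have hadj : G.Adj w v := (SimpleGraph.mem_neighborFinset _ _ _).mp hwNv |>.symm
        exact ⟨v, hadj, by push_neg; exact ⟨Ne.symm huv, hvD⟩⟩
      · exact ⟨x, hx, by push_neg; exact ⟨hxu, hx2⟩⟩
  have hpoint : ∀ w : V, w ∈ (Finset.univ.filter fun w => ∃ x, G.Adj w x ∧ x ∉ D) →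
      ∀ b' : Bool, tgVal G b' (insert u D ∪ G.neighborFinset w)
        = tgVal G b' (D ∪ G.neighborFinset w) := by
    intro w hw b'
    by_cases hu : u ∈ G.neighborFinset w
    · have : insert u D ∪ G.neighborFinset w = D ∪ G.neighborFinset w := by
        ext a
        simp only [Finset.mem_union, Finset.mem_insert]
        constructor
        · rintro ((rfl | ha) | ha)
          · exact Or.inr hu
          · exact Or.inl ha
          · exact Or.inr ha
        · tauto
      rw [this]
    · have hv' : v ∉ G.neighborFinset w := by
        intro hv2
        apply hu
        have : w ∈ G.neighborFinset v := by
          rw [SimpleGraph.mem_neighborFinset] at hv2 ⊢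
          exact hv2.symm
        rw [← h, SimpleGraph.mem_neighborFinset] at this
        rw [SimpleGraph.mem_neighborFinset]
        exact this.symm
      rw [Finset.insert_union]
      exact tg_insert_twin G huv h b' (D ∪ G.neighborFinset w)
        (by simp only [Finset.mem_union]; push_neg; exact ⟨hvD, hv'⟩)
  rw [tgVal, tgVal]
  by_cases hne : (Finset.univ.filter fun w => ∃ x, G.Adj w x ∧ x ∉ D).Nonempty
  · rw [dif_pos (hset ▸ hne), dif_pos hne]
    congr 1
    cases b
    · simp only [Bool.false_eq_true, if_false]
      exact sup'_attach_congr hset _ _ _ _ (fun w hw => hpoint w hw true)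
    · simp only [if_true]
      exact inf'_attach_congr hset _ _ _ _ (fun w hw => hpoint w hw false)
  · rw [dif_neg (hset ▸ hne), dif_neg hne]
termination_by (Finset.univ \ D).card
decreasing_by
  · simp only [Finset.mem_filter, Finset.mem_univ, true_and] at hw
    obtain ⟨x, hadj, hx⟩ := hw
    apply Finset.card_lt_card
    rw [Finset.ssubset_iff_of_subset
      (Finset.sdiff_subset_sdiff (subset_refl _) Finset.subset_union_left)]
    exact ⟨x, by simp [hx], by simp [hadj]⟩

theorem stmt9 {V : Type*} [Fintype V] (G : SimpleGraph V) (hcrit : IsTGCritical G)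
    (u v : V) (huv : u ≠ v) :
    G.neighborSet u ≠ G.neighborSet v := by
  intro h
  have hfin : G.neighborFinset u = G.neighborFinset v := by
    simp only [SimpleGraph.neighborFinset, h]
  have := tg_insert_twin G huv hfin true ∅ (Finset.notMem_empty v)
  have heq : gammaTGSub G {u} = gammaTG G := by
    simpa [gammaTGSub, gammaTG] using this
  exact absurd (heq ▸ hcrit u) (lt_irrefl _)
end

section
/- If G is a γtg-critical graph and v is any vertex of G, then no neighbor of v is an optimal first move of Dominator in the Dominator-start game on G|v. -/
open scoped Classical

/-!
If `d₁` is adjacent to `v`, then `v` is already totally dominated after Dominator plays `d₁`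
on `G` itself, so `G|v` after `d₁` is the same position as `G` after `d₁`. Hence
`γtg(G) ≤ 1 + γtg'(G | ({v} ∪ N(d₁))) = γtg(G|v)`, contradicting criticality.
-/

open Finset

theorem tgVal_true_le_one_add {V : Type*} [Fintype V] (G : SimpleGraph V) {D : Finset V} {w : V}
    (hw : ∃ u, G.Adj w u ∧ u ∉ D) :
    tgVal G true D ≤ 1 + tgVal G false (D ∪ G.neighborFinset w) := by
  have hmem : w ∈ univ.filter fun x => ∃ u, G.Adj x u ∧ u ∉ D := by simpa using hw
  rw [tgVal, dif_pos ⟨w, hmem⟩, if_pos rfl]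
  exact Nat.add_le_add_left (inf'_le _ (mem_attach _ ⟨w, hmem⟩)) 1

theorem stmt10_general {V : Type*} [Fintype V] (G : SimpleGraph V) (hcrit : IsTGCritical G)
    (v d₁ : V)
    (hopt : gammaTGSub G {v} = 1 + tgVal G false ({v} ∪ G.neighborFinset d₁)) :
    ¬ G.Adj v d₁ := by
  intro hadj
  have hsame : {v} ∪ G.neighborFinset d₁ = ∅ ∪ G.neighborFinset d₁ := by
    rw [empty_union, union_eq_right, singleton_subset_iff, SimpleGraph.mem_neighborFinset]
    exact hadj.symm
  have hle : gammaTG G ≤ gammaTGSub G {v} := by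
    rw [hopt, hsame]
    exact tgVal_true_le_one_add G ⟨v, hadj.symm, notMem_empty v⟩
  exact (hcrit v).not_ge hle

theorem stmt10 {V : Type*} [Fintype V] (G : SimpleGraph V) (hcrit : IsTGCritical G)
    (v d₁ : V)
    (hlegal : ∃ u, G.Adj d₁ u ∧ u ∉ ({v} : Finset V))
    (hopt : gammaTGSub G {v} = 1 + tgVal G false ({v} ∪ G.neighborFinset d₁)) :
    ¬ G.Adj v d₁ :=
  stmt10_general G hcrit v d₁ hopt
end

section
/- For the path P₄ and every vertex v of P₄, γtg(P₄|v) = 2, while γtg(P₄) = 3; hence P₄ is 3-γtg-critical. -/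
open scoped Classical

section Aux

instance pathGraph4AdjDec : DecidableRel (SimpleGraph.pathGraph 4).Adj := fun _ _ =>
  decidable_of_iff _ (SimpleGraph.pathGraph_adj).symm

/-- Computable fuel-based mirror of `tgVal`. -/
def tgF {V : Type*} [Fintype V] [DecidableEq V] (G : SimpleGraph V) [DecidableRel G.Adj] :
    ℕ → Bool → Finset V → ℕ
  | 0, _, _ => 0
  | (n+1), b, D =>
    if h : (Finset.univ.filter fun v => ∃ u, G.Adj v u ∧ u ∉ D).Nonempty then
      1 + (if b then
            (Finset.univ.filter fun v => ∃ u, G.Adj v u ∧ u ∉ D).inf' h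
              (fun v => tgF G n false (D ∪ G.neighborFinset v))
           else
            (Finset.univ.filter fun v => ∃ u, G.Adj v u ∧ u ∉ D).sup' h
              (fun v => tgF G n true (D ∪ G.neighborFinset v)))
    else 0

lemma inf'_eq_attach {α : Type*} {s t : Finset α} (hst : s = t) (hs : s.Nonempty)
    (ht : t.attach.Nonempty) (f : α → ℕ) (g : {x // x ∈ t} → ℕ)
    (hfg : ∀ x : {x // x ∈ t}, f x.1 = g x) :
    s.inf' hs f = t.attach.inf' ht g := by
  subst hst
  apply le_antisymm
  · apply Finset.le_inf'
    intro b _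
    exact le_trans (Finset.inf'_le f b.2) (le_of_eq (hfg b))
  · apply Finset.le_inf'
    intro b hb
    exact le_trans (Finset.inf'_le g (Finset.mem_attach _ ⟨b, hb⟩))
      (le_of_eq (hfg ⟨b, hb⟩).symm)

lemma sup'_eq_attach {α : Type*} {s t : Finset α} (hst : s = t) (hs : s.Nonempty)
    (ht : t.attach.Nonempty) (f : α → ℕ) (g : {x // x ∈ t} → ℕ)
    (hfg : ∀ x : {x // x ∈ t}, f x.1 = g x) :
    s.sup' hs f = t.attach.sup' ht g := by
  subst hst
  apply le_antisymm
  · apply Finset.sup'_le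
    intro b hb
    exact le_trans (le_of_eq (hfg ⟨b, hb⟩))
      (Finset.le_sup' g (Finset.mem_attach _ ⟨b, hb⟩))
  · apply Finset.sup'_le
    intro b _
    exact le_trans (le_of_eq (hfg b).symm) (Finset.le_sup' f b.2)

set_option maxHeartbeats 2000000 in
lemma tgF_eq_tgVal {V : Type*} [Fintype V] [DecidableEq V] (G : SimpleGraph V)
    [DecidableRel G.Adj] :
    ∀ (fuel : ℕ) (b : Bool) (D : Finset V), (Finset.univ \ D).card ≤ fuel →
      tgF G fuel b D = tgVal G b D := by
  have hfc : ∀ (D : Finset V) (h1 h2 : DecidablePred fun v : V => ∃ u, G.Adj v u ∧ u ∉ D),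
      @Finset.filter _ _ h1 Finset.univ = @Finset.filter _ _ h2 Finset.univ :=
    fun D h1 h2 => Subsingleton.elim h1 h2 ▸ rfl
  intro fuel
  induction fuel with
  | zero =>
    intro b D h
    have hD : ∀ u : V, u ∈ D := by
      intro u
      by_contra hu
      have hmem : u ∈ Finset.univ \ D := by simp [hu]
      have := Finset.card_pos.mpr ⟨u, hmem⟩
      omega
    have hne : ¬ (Finset.univ.filter fun v => ∃ u, G.Adj v u ∧ u ∉ D).Nonempty := by
      simp only [Finset.filter_nonempty_iff]
      rintro ⟨v, -, u, -, hu⟩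
      exact hu (hD u)
    rw [tgVal]
    split
    · next hcc =>
      rw [hfc D _ inferInstance] at hcc
      exact absurd hcc hne
    · rfl
  | succ n ih =>
    intro b D h
    have key : ∀ v : V, v ∈ (Finset.univ.filter fun w => ∃ u, G.Adj w u ∧ u ∉ D) →
        (Finset.univ \ (D ∪ G.neighborFinset v)).card ≤ n := by
      intro v hv
      simp only [Finset.mem_filter, Finset.mem_univ, true_and] at hv
      obtain ⟨u, hadj, hu⟩ := hv
      have hlt : (Finset.univ \ (D ∪ G.neighborFinset v)).card < (Finset.univ \ D).card := by
        apply Finset.card_lt_card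
        rw [Finset.ssubset_iff_of_subset
          (Finset.sdiff_subset_sdiff (subset_refl _) Finset.subset_union_left)]
        exact ⟨u, by simp [hu], by simp [hadj]⟩
      omega
    rw [tgVal]
    split
    · next hcc =>
      have hcc2 := hcc
      rw [hfc D _ inferInstance] at hcc2
      rw [tgF, dif_pos hcc2]
      congr 1
      cases b with
      | true =>
        simp only [if_true]
        refine inf'_eq_attach (hfc D inferInstance _) hcc2 _ _ _ (fun x => ?_)
        refine (ih false _ (key x.1 ?_)).trans (by congr!)
        obtain ⟨v, hv⟩ := x
        rw [hfc D _ inferInstance] at hv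
        exact hv
      | false =>
        simp only [Bool.false_eq_true, if_false]
        refine sup'_eq_attach (hfc D inferInstance _) hcc2 _ _ _ (fun x => ?_)
        refine (ih true _ (key x.1 ?_)).trans (by congr!)
        obtain ⟨v, hv⟩ := x
        rw [hfc D _ inferInstance] at hv
        exact hv
    · next hcc =>
      rw [tgF, dif_neg]
      intro hcf
      rw [hfc D _ inferInstance] at hcf
      exact hcc (by rw [hfc D _ inferInstance]; exact hcf)

end Aux

theorem stmt17 :
    gammaTG (SimpleGraph.pathGraph 4) = 3 ∧
    (∀ v : Fin 4, gammaTGSub (SimpleGraph.pathGraph 4) {v} = 2) ∧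
    IsKTGCritical 3 (SimpleGraph.pathGraph 4) := by
  have hcard : ∀ D : Finset (Fin 4), (Finset.univ \ D).card ≤ 4 :=
    fun D => le_trans (Finset.card_le_card (Finset.sdiff_subset)) (by simp)
  have h1 : gammaTG (SimpleGraph.pathGraph 4) = 3 := by
    rw [gammaTG, ← tgF_eq_tgVal _ 4 true ∅ (hcard ∅)]
    decide
  have h2 : ∀ v : Fin 4, gammaTGSub (SimpleGraph.pathGraph 4) {v} = 2 := by
    intro v
    rw [gammaTGSub, ← tgF_eq_tgVal _ 4 true {v} (hcard {v})]
    revert v; decide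
  exact ⟨h1, h2, h1, fun v => by rw [h1, h2 v]; omega⟩
end
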